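/- Let S = S_1/.../S_k and T = T_1/.../T_k be planar binary trees decomposed via the left-grafting operation / (decompositions not necessarily maximal), with |S_i| = |T_i| for all i. Then S ≤ T in the Tamari lattice if and only if S_i ≤ T_i for all i. -/
import Mathlib


/-- Planar binary trees, counted by internal nodes. -/
inductive PBT where
  | leaf : PBT
  | node : PBT → PBT → PBT
deriving DecidableEq

namespace PBT

/-- Number of internal nodes. -/
def size : PBT → ℕ
  | leaf => 0
  | node l r => size l + size r + 1

/-- One rotation step, going up in the Tamari order: a right comb
configuration `a·(b·c)` is replaced by a left comb configuration `(a·b)·c`,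
possibly deep inside the tree. -/
inductive Rot : PBT → PBT → Prop
  | rotate (a b c : PBT) : Rot (node a (node b c)) (node (node a b) c)
  | left {l l' : PBT} (r : PBT) : Rot l l' → Rot (node l r) (node l' r)
  | right (l : PBT) {r r' : PBT} : Rot r r' → Rot (node l r) (node l r')

/-- The Tamari order: the reflexive-transitive closure of rotation. -/
def le (S T : PBT) : Prop := Relation.ReflTransGen Rot S T

/-- The unique tree with one internal node. -/
def Y : PBT := node leaf leaf

/-- `S / T`: graft the root of `S` onto the leftmost leaf of `T`. -/
def graftL : PBT → PBT → PBT
  | S, leaf => S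
  | S, node l r => node (graftL S l) r

/-- `T₁ / T₂ / ⋯ / T_k` for a list of trees (the empty graft is the trivial tree). -/
def listGraft (L : List PBT) : PBT := L.foldr graftL leaf

/-- A (nontrivial) tree is indecomposable if it is not of the form `S / T`
with `S`, `T` both nontrivial. -/
def Indec (T : PBT) : Prop :=
  T ≠ leaf ∧ ¬ ∃ S U : PBT, S ≠ leaf ∧ U ≠ leaf ∧ graftL S U = T

end PBT

namespace PBT

theorem Rot.size_eq {S T : PBT} (h : Rot S T) : size S = size T := by
  induction h with
  | rotate a b c => simp [size]; omega
  | left r h ih => simp [size, ih]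
  | right l h ih => simp [size, ih]

theorem le.size_eq {S T : PBT} (h : le S T) : size S = size T := by
  induction h with
  | refl => rfl
  | tail _ h ih => exact ih.trans h.size_eq

theorem size_graftL (S U : PBT) : size (graftL S U) = size S + size U := by
  induction U with
  | leaf => simp [graftL, size]
  | node l r ih => simp [graftL, size, ih]; omega

theorem graftL_inj {S U S' U' : PBT} (h : graftL S U = graftL S' U')
    (hs : size S = size S') : S = S' ∧ U = U' := by
  induction U generalizing U' with
  | leaf =>
    cases U' with
    | leaf => exact ⟨h, rfl⟩
    | node l' r' =>
      exfalso
      have := congrArg size h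
      rw [size_graftL, size_graftL] at this
      simp [size] at this
      omega
  | node l r ih =>
    cases U' with
    | leaf =>
      exfalso
      have := congrArg size h
      rw [size_graftL, size_graftL] at this
      simp [size] at this
      omega
    | node l' r' =>
      simp only [graftL, node.injEq] at h
      obtain ⟨h1, h2⟩ := h
      obtain ⟨hS, hl⟩ := ih h1
      exact ⟨hS, by rw [hl, h2]⟩

theorem rot_graftL_left {S S' : PBT} (U : PBT) (h : Rot S S') :
    Rot (graftL S U) (graftL S' U) := by
  induction U with
  | leaf => exact h
  | node l r ih => exact Rot.left r ih

theorem rot_graftL_right (S : PBT) {U U' : PBT} (h : Rot U U') :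
    Rot (graftL S U) (graftL S U') := by
  induction h with
  | rotate a b c => exact Rot.rotate (graftL S a) b c
  | left r h ih => exact Rot.left r ih
  | right l h ih => exact Rot.right _ h

theorem le_graftL_mono {S S' U U' : PBT} (h1 : le S S') (h2 : le U U') :
    le (graftL S U) (graftL S' U') := by
  have a1 : le (graftL S U) (graftL S' U) := by
    induction h1 with
    | refl => exact Relation.ReflTransGen.refl
    | tail _ h ih => exact ih.tail (rot_graftL_left _ h)
  have a2 : le (graftL S' U) (graftL S' U') := by
    induction h2 with
    | refl => exact Relation.ReflTransGen.refl
    | tail _ h ih => exact ih.tail (rot_graftL_right _ h)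
  exact a1.trans a2

theorem rot_graftL_inv {S U X : PBT} (h : Rot (graftL S U) X) :
    ∃ S' U', X = graftL S' U' ∧
      ((Rot S S' ∧ U' = U) ∨ (Rot U U' ∧ S' = S)) := by
  induction U generalizing X with
  | leaf => exact ⟨X, leaf, rfl, Or.inl ⟨h, rfl⟩⟩
  | node l r ih =>
    rw [graftL] at h
    cases h with
    | rotate a b c =>
      refine ⟨S, node (node l b) c, ?_, Or.inr ⟨Rot.rotate l b c, rfl⟩⟩
      simp [graftL]
    | @left _ l2 _ h =>
      obtain ⟨S', l', rfl, hc⟩ := ih h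
      rcases hc with ⟨hr, h2⟩ | ⟨hr, h2⟩
      · exact ⟨S', node l' r, rfl, Or.inl ⟨hr, by rw [h2]⟩⟩
      · exact ⟨S', node l' r, rfl, Or.inr ⟨Rot.left r hr, h2⟩⟩
    | @right _ _ r2 h =>
      exact ⟨S, node l r2, rfl, Or.inr ⟨Rot.right l h, rfl⟩⟩

theorem le_graftL_inv {S U T : PBT} (h : le (graftL S U) T) :
    ∃ S' U', T = graftL S' U' ∧ le S S' ∧ le U U' := by
  induction h with
  | refl => exact ⟨S, U, rfl, Relation.ReflTransGen.refl, Relation.ReflTransGen.refl⟩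
  | tail _ h ih =>
    obtain ⟨S', U', rfl, hS, hU⟩ := ih
    obtain ⟨S'', U'', rfl, hc⟩ := rot_graftL_inv h
    rcases hc with ⟨hr, h2⟩ | ⟨hr, h2⟩
    · subst h2; exact ⟨S'', U'', rfl, hS.tail hr, hU⟩
    · subst h2; exact ⟨S'', U'', rfl, hS, hU.tail hr⟩

end PBT

/-- If `S = S₁/⋯/S_k` and `T = T₁/⋯/T_k` (decompositions not necessarily maximal)
with `|Sᵢ| = |Tᵢ|` for all `i`, then `S ≤ T` in the Tamari lattice if and only if
`Sᵢ ≤ Tᵢ` for all `i`. -/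
theorem tamari_le_factorization (Ls Lt : List PBT)
    (hLs : ∀ t ∈ Ls, t ≠ PBT.leaf) (hLt : ∀ t ∈ Lt, t ≠ PBT.leaf)
    (hsize : List.Forall₂ (fun a b => PBT.size a = PBT.size b) Ls Lt) :
    PBT.le (PBT.listGraft Ls) (PBT.listGraft Lt) ↔ List.Forall₂ PBT.le Ls Lt := by
  clear hLs hLt
  induction hsize with
  | nil =>
    simp only [PBT.listGraft, List.foldr, List.forall₂_nil_left_iff]
    exact ⟨fun _ => trivial, fun _ => Relation.ReflTransGen.refl⟩
  | @cons a b Ls' Lt' hab _ ih =>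
    simp only [PBT.listGraft, List.foldr] at *
    constructor
    · intro h
      obtain ⟨S', U', heq, hS, hU⟩ := PBT.le_graftL_inv h
      have hsz : PBT.size S' = PBT.size b := by
        rw [← hS.size_eq, hab]
      obtain ⟨rfl, rfl⟩ := PBT.graftL_inj heq.symm hsz
      exact List.Forall₂.cons hS (ih.mp hU)
    · intro h
      cases h with
      | cons h1 h2 => exact PBT.le_graftL_mono h1 (ih.mpr h2)
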